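/- arXiv:1807.04496 — 2 statements merged into one kernel-verified Lean document; each statement's English description precedes it below -/
import Mathlib

section
/- Let g be a homogeneous degree-k polynomial computed by a commutative circuit C, let ĝ be the polynomial computed by the noncommutative version C^{nc}, and let f be any homogeneous degree-k polynomial with symmetrization f*. Then for any point a ∈ F^n, the scaled Hadamard product satisfies (f ∘^s g)(a) = (f* ∘ ĝ)(a), where on the right the noncommutative Hadamard product is evaluated by substituting a_i for y_i. -/
/-!
Summing `f*` against `ĝ` word by word and grouping the words by their commutative image:
for a word `w` projecting to the monomial `m`, the words `w ∘ σ` run over the words projecting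
to `m`, each one hit by exactly `m!` permutations (the stabiliser of `w` permutes positions
carrying equal letters). Hence `f*` has coefficient `m! · [m]f` at `w`, while summing `ĝ` over
the words projecting to `m` gives `[m]g`.
-/

open Finset
open scoped Nat

section WordMultidegree

variable {ι α : Type*} [Fintype ι] [DecidableEq α]

/-- The word `w` projects to the commutative monomial `x ^ wordMultidegree w`. -/
noncomputable def wordMultidegree (w : ι → α) : α →₀ ℕ := ∑ j, Finsupp.single (w j) 1

theorem wordMultidegree_apply (w : ι → α) (a : α) : wordMultidegree w a = #{j | w j = a} := by
  rw [card_filter]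
  simp [wordMultidegree, Finsupp.single_apply, Finsupp.finsetSum_apply]

theorem wordMultidegree_eq_iff_exists_perm {w w' : ι → α} :
    wordMultidegree w' = wordMultidegree w ↔ ∃ σ : Equiv.Perm ι, w ∘ σ = w' := by
  constructor
  · intro h
    have hcard (a : α) : Fintype.card {j // w' j = a} = Fintype.card {j // w j = a} := by
      simpa [Fintype.card_subtype, wordMultidegree_apply] using DFunLike.congr_fun h a
    let e a : {j // w' j = a} ≃ {j // w j = a} := Fintype.equivOfCardEq (hcard a)
    exact ⟨(Equiv.sigmaFiberEquiv w').symm.trans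
        ((Equiv.sigmaCongrRight e).trans (Equiv.sigmaFiberEquiv w)),
      funext fun j => (e (w' j) ⟨j, rfl⟩).prop⟩
  · rintro ⟨σ, rfl⟩
    exact Equiv.sum_comp σ fun j => Finsupp.single (w j) 1

variable [Fintype α]

theorem prod_comp_eq_prod_pow_wordMultidegree {N : Type*} [CommMonoid N] (w : ι → α)
    (x : α → N) : ∏ j, x (w j) = ∏ a, x a ^ wordMultidegree w a := by
  rw [← Fintype.prod_fiberwise' w x]
  simp [wordMultidegree_apply, Fintype.card_subtype]

variable [DecidableEq ι]

theorem card_perm_comp_eq_comp (w : ι → α) (τ : Equiv.Perm ι) :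
    #{σ : Equiv.Perm ι | w ∘ σ = w ∘ τ} = ∏ a, (wordMultidegree w a)! := by
  have hshift (σ : Equiv.Perm ι) : w ∘ σ = w ∘ τ ↔ w ∘ ⇑(σ * τ⁻¹) = w := by
    simp only [funext_iff, Function.comp_apply, Equiv.Perm.coe_mul]
    exact ⟨fun h x => by simpa using h (τ⁻¹ x), fun h x => by simpa using h (τ x)⟩
  rw [card_equiv (Equiv.mulRight τ⁻¹) (t := {σ : Equiv.Perm ι | w ∘ σ = w})
      (by simpa using hshift), ← Fintype.card_subtype, DomMulAct.stabilizer_card]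
  simp [Fintype.card_subtype, wordMultidegree_apply]

theorem sum_perm_comp_eq_smul {M : Type*} [AddCommMonoid M] (w : ι → α)
    (u : (ι → α) → M) :
    ∑ σ : Equiv.Perm ι, u (w ∘ σ) =
      (∏ a, (wordMultidegree w a)!) •
        ∑ w' with wordMultidegree w' = wordMultidegree w, u w' := by
  have himage : univ.image (fun σ : Equiv.Perm ι => w ∘ σ) =
      ({w' | wordMultidegree w' = wordMultidegree w} : Finset (ι → α)) := by
    ext w'
    simp [wordMultidegree_eq_iff_exists_perm]
  rw [sum_comp, himage, smul_sum]
  refine sum_congr rfl fun w' hw' => ?_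
  obtain ⟨τ, rfl⟩ := wordMultidegree_eq_iff_exists_perm.mp (mem_filter.mp hw').2
  rw [card_perm_comp_eq_comp]

theorem sum_wordMultidegree_mul_eq_sum {R : Type*} [NonUnitalNonAssocSemiring R]
    {c h : (α →₀ ℕ) → R} {ψ : (ι → α) → R}
    (hc : ∀ m, c m = ∑ w with wordMultidegree w = m, ψ w) {s : Finset (α →₀ ℕ)}
    (hs : ∀ m ∉ s, h m = 0) :
    ∑ w, h (wordMultidegree w) * ψ w = ∑ m ∈ s, h m * c m := by
  calc ∑ w, h (wordMultidegree w) * ψ w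
      = ∑ w with wordMultidegree w ∈ s, h (wordMultidegree w) * ψ w :=
        (sum_filter_of_ne fun w _ hw => by_contra fun hws => hw (by simp [hs _ hws])).symm
    _ = ∑ m ∈ s, ∑ w with wordMultidegree w = m, h (wordMultidegree w) * ψ w :=
        (sum_fiberwise_eq_sum_filter _ _ _ _).symm
    _ = ∑ m ∈ s, h m * c m := by
        refine sum_congr rfl fun m _ => ?_
        rw [hc, mul_sum]
        exact sum_congr rfl fun w hw => by rw [(mem_filter.mp hw).2]

end WordMultidegree

theorem stmt_6_general (F : Type*) [Field F] (n k : ℕ)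
    (f g : MvPolynomial (Fin n) F)
    (fhat ghat : (Fin k → Fin n) → F)
    (hflift : ∀ m : Fin n →₀ ℕ,
      f.coeff m = ∑ w ∈ Finset.univ.filter
        (fun w : Fin k → Fin n => (∑ j : Fin k, Finsupp.single (w j) 1) = m), fhat w)
    (hglift : ∀ m : Fin n →₀ ℕ,
      g.coeff m = ∑ w ∈ Finset.univ.filter
        (fun w : Fin k → Fin n => (∑ j : Fin k, Finsupp.single (w j) 1) = m), ghat w)
    (a : Fin n → F) :
    (∑ m ∈ f.support,
        (↑(∏ i : Fin n, (m i).factorial) * f.coeff m * g.coeff m) * ∏ i : Fin n, a i ^ m i)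
      = ∑ w : Fin k → Fin n,
          (∑ σ : Equiv.Perm (Fin k), fhat (w ∘ σ)) * ghat w * ∏ j : Fin k, a (w j) := by
  set c : (Fin n →₀ ℕ) → F := fun m => ↑(∏ i, (m i)!) * f.coeff m * ∏ i, a i ^ m i
  have hc_word (w : Fin k → Fin n) :
      (∑ σ : Equiv.Perm (Fin k), fhat (w ∘ σ)) * ∏ j, a (w j) = c (wordMultidegree w) := by
    rw [sum_perm_comp_eq_smul, nsmul_eq_mul, prod_comp_eq_prod_pow_wordMultidegree w a]
    simp only [c, hflift]
    rfl
  calc _ = ∑ m ∈ f.support, c m * g.coeff m := sum_congr rfl fun m _ => by ring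
    _ = ∑ w, c (wordMultidegree w) * ghat w :=
        (sum_wordMultidegree_mul_eq_sum hglift fun m hm => by
          simp [c, MvPolynomial.notMem_support_iff.mp hm]).symm
    _ = _ := sum_congr rfl fun w _ => by rw [← hc_word]; ring

/-- The scaled Hadamard product evaluated at a point equals the noncommutative
Hadamard product of `f*` and `ĝ` evaluated at that point:
`(f ∘ˢ g)(a) = (f* ∘ ĝ)(a)`. Words of degree `k` are functions `Fin k → Fin n`,
and `fhat`, `ghat` are noncommutative lifts of `f` and `g` respectively. -/
theorem stmt_6 (F : Type*) [Field F] (n k : ℕ)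
    (f g : MvPolynomial (Fin n) F)
    (hf : f.IsHomogeneous k) (hg : g.IsHomogeneous k)
    (fhat ghat : (Fin k → Fin n) → F)
    (hflift : ∀ m : Fin n →₀ ℕ,
      f.coeff m = ∑ w ∈ Finset.univ.filter
        (fun w : Fin k → Fin n => (∑ j : Fin k, Finsupp.single (w j) 1) = m), fhat w)
    (hglift : ∀ m : Fin n →₀ ℕ,
      g.coeff m = ∑ w ∈ Finset.univ.filter
        (fun w : Fin k → Fin n => (∑ j : Fin k, Finsupp.single (w j) 1) = m), ghat w)
    (a : Fin n → F) :
    (∑ m ∈ f.support,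
        (↑(∏ i : Fin n, (m i).factorial) * f.coeff m * g.coeff m) * ∏ i : Fin n, a i ^ m i)
      = ∑ w : Fin k → Fin n,
          (∑ σ : Equiv.Perm (Fin k), fhat (w ∘ σ)) * ghat w * ∏ j : Fin k, a (w j) :=
  stmt_6_general F n k f g fhat ghat hflift hglift a
end

section
/- Let f, g ∈ F⟨y_1,...,y_n⟩ be homogeneous noncommutative polynomials of degree k, and suppose g = (M_1 M_2 ··· M_k)(1,w) for w×w matrices M_i of homogeneous linear forms (an ABP). Define, for each i ∈ [n], the (k+1)w × (k+1)w block superdiagonal matrix A_i whose (j, j+1) block is the scalar matrix [y_i]M_j for 1 ≤ j ≤ k and all other blocks zero. Then (f ∘ g)(1,1,...,1) = (f(A_1,...,A_n))(1, (k+1)w), where ∘ is the word-wise Hadamard product. -/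
/-!
Every word `y_{i_1} ⋯ y_{i_k}` evaluated at the block-superdiagonal matrices `A_i` walks
through the block columns `0 → 1 → ⋯ → k`, picking up the block `[y_{i_j}]M_j` at step `j`.
Hence the `(0, k)` block of `A_{i_1} ⋯ A_{i_k}` is `[y_{i_1}]M_1 ⋯ [y_{i_k}]M_k`, whose corner
entry is the coefficient of the word in `g`; summing against the coefficients of `f` gives
the Hadamard product evaluated at the all-ones point.
-/

namespace Matrix

variable {R : Type*} [Semiring R] {m : Type*} [Fintype m] {k : ℕ}

def blockSuperdiag (B : Fin k → Matrix m m R) : Matrix (Fin (k + 1) × m) (Fin (k + 1) × m) R :=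
  fun x y => if h : (y.1 : ℕ) = x.1 + 1 ∧ (x.1 : ℕ) < k then B ⟨x.1, h.2⟩ x.2 y.2 else 0

theorem mul_blockSuperdiag_apply {l : Type*} {X : Matrix l (Fin (k + 1) × m) R}
    {Y : Matrix l m R} {t : Fin k} (hX : ∀ i p s, X i (p, s) = if p = t.castSucc then Y i s else 0)
    (B : Fin k → Matrix m m R) (i : l) (q : Fin (k + 1)) (s : m) :
    (X * blockSuperdiag B) i (q, s) = if q = t.succ then (Y * B t) i s else 0 := by
  rw [mul_apply, Fintype.sum_prod_type, Finset.sum_eq_single t.castSucc]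
  · simp only [hX, if_true]
    split_ifs with hq
    · subst hq
      simp [mul_apply, blockSuperdiag]
    · refine Finset.sum_eq_zero fun r _ => ?_
      rw [blockSuperdiag, dif_neg fun h => hq (Fin.ext h.1), mul_zero]
  · intro p _ hp
    simp [hX, hp]
  · simp

theorem prod_ofFn_blockSuperdiag_apply_zero [DecidableEq m] :
    ∀ (t : ℕ) (ht : t ≤ k) (C : Fin t → Fin k → Matrix m m R) (r : m) (q : Fin (k + 1)) (s : m),
      (List.ofFn fun j => blockSuperdiag (C j)).prod (0, r) (q, s) =
        if (q : ℕ) = t then (List.ofFn fun j => C j (Fin.castLE ht j)).prod r s else 0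
  | 0, _, _, r, q, s => by
    simp only [List.ofFn_zero, List.prod_nil, one_apply, Prod.mk.injEq]
    by_cases hq : (q : ℕ) = 0
    · simp [hq, Fin.ext_iff]
    · simp [hq, Fin.ext_iff, Ne.symm hq]
  | t + 1, ht, C, r, q, s => by
    have hX := prod_ofFn_blockSuperdiag_apply_zero t (by omega) (fun j => C j.castSucc)
    simp only [List.ofFn_succ', List.prod_concat]
    set P := (List.ofFn fun j : Fin t => blockSuperdiag (C j.castSucc)).prod
    have hstep := mul_blockSuperdiag_apply (X := fun r' y => P (0, r') y)
      (Y := (List.ofFn fun j : Fin t => C j.castSucc (Fin.castLE ht j.castSucc)).prod)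
      (t := Fin.castLE ht (Fin.last t)) (fun r' p s' => by rw [hX]; simp [Fin.ext_iff])
      (C (Fin.last t)) r q s
    refine hstep.trans ?_
    simp [Fin.ext_iff]

end Matrix

/-- Hadamard product via ABP block matrices: if `g` is computed by an ABP
`g(w) = (M_1⋯M_k)(1,d)` (here `Mc j i = [y_i]M_j` is the coefficient matrix),
and `A i` is the block superdiagonal matrix with `(j, j+1)` block `[y_i]M_j`,
then `(f ∘ g)(1,…,1) = (f(A_1,…,A_n))(1, (k+1)d)`, where `f` and `g` are
(coefficient functions of) homogeneous degree-`k` noncommutative polynomials. -/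
theorem stmt_16 (F : Type*) [Field F] (n k d : ℕ) (hd : 0 < d)
    (f g : (Fin k → Fin n) → F)
    (Mc : Fin k → Fin n → Matrix (Fin d) (Fin d) F)
    (hg : ∀ w : Fin k → Fin n,
      g w = ((List.ofFn fun j : Fin k => Mc j (w j)).prod) ⟨0, hd⟩ ⟨d - 1, by omega⟩)
    (A : Fin n → Matrix (Fin (k + 1) × Fin d) (Fin (k + 1) × Fin d) F)
    (hA : ∀ (i : Fin n) (p q : Fin (k + 1)) (r s : Fin d),
      A i (p, r) (q, s) =
        if h : (q : ℕ) = (p : ℕ) + 1 ∧ (p : ℕ) < k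
          then Mc ⟨(p : ℕ), h.2⟩ i r s else 0) :
    (∑ w : Fin k → Fin n, f w * g w)
      = (∑ w : Fin k → Fin n, f w • (List.ofFn fun j : Fin k => A (w j)).prod)
          (0, ⟨0, hd⟩) (Fin.last k, ⟨d - 1, by omega⟩) := by
  have hA' : ∀ i, A i = Matrix.blockSuperdiag fun j => Mc j i := fun i => by
    ext ⟨p, r⟩ ⟨q, s⟩
    exact hA i p q r s
  rw [Matrix.sum_apply]
  refine Finset.sum_congr rfl fun w _ => ?_
  rw [Matrix.smul_apply, smul_eq_mul, hg w, funext hA',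
    Matrix.prod_ofFn_blockSuperdiag_apply_zero k le_rfl]
  simp
end
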